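/- arXiv:1412.6559 — 8 statements merged into one kernel-verified Lean document; each statement's English description precedes it below -/
import Mathlib

section
/- Let (L, R) be an AWFS on C. If maps (c, d) : g → g' in C^2 between underlying maps of R-algebras ĝ = (g, p) and ĝ' = (g', p') commute with the canonical lifting operations against all L-coalgebras, then (c, d) is a morphism of R-algebras, i.e. c ∘ p = p' ∘ E(c, d). Consequently the functor from R-algebras to maps-equipped-with-coalgebra-lifting-operations is fully faithful. -/
open CategoryTheory

universe v u

/-- A functorial factorisation on `C`. -/
structure FunctorialFactorisation (C : Type u) [Category.{v} C] where
  E : Arrow C ⥤ C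
  l : Arrow.leftFunc ⟶ E
  r : E ⟶ Arrow.rightFunc
  fac : ∀ f : Arrow C, l.app f ≫ r.app f = f.hom

namespace FunctorialFactorisation

variable {C : Type u} [Category.{v} C] (ff : FunctorialFactorisation C)

/-- The counit square `ε_f = (1, ρ f) : λ f → f`. -/
def εhom (f : Arrow C) : Arrow.mk (ff.l.app f) ⟶ f :=
  Arrow.homMk (u := 𝟙 f.left) (v := ff.r.app f) (by exact (Category.id_comp _).trans (ff.fac f).symm)

/-- The unit square `η_f = (λ f, 1) : f → ρ f`. -/
def ηhom (f : Arrow C) : f ⟶ Arrow.mk (ff.r.app f) :=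
  Arrow.homMk (u := ff.l.app f) (v := 𝟙 f.right) (by exact (ff.fac f).trans (Category.comp_id _).symm)

end FunctorialFactorisation

/-- An algebraic weak factorisation system on `C`: a functorial factorisation `(λ, E, ρ)`
together with an extension of `(L, ε)` to a comonad over the domain functor, an extension of
`(R, η)` to a monad over the codomain functor, and a distributive law of the comonad over the
monad (with prescribed domain/codomain components).  Since the comultiplication and
multiplication squares have one identity component, all the data is in the maps
`comul f : E f ⟶ E (λ f)` and `mul f : E (ρ f) ⟶ E f`. -/
structure AWFS (C : Type u) [Category.{v} C] where
  ff : FunctorialFactorisation C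
  comul : ∀ f : Arrow C, ff.E.obj f ⟶ ff.E.obj (Arrow.mk (ff.l.app f))
  mul : ∀ f : Arrow C, ff.E.obj (Arrow.mk (ff.r.app f)) ⟶ ff.E.obj f
  comul_w : ∀ f : Arrow C, ff.l.app f ≫ comul f = ff.l.app (Arrow.mk (ff.l.app f))
  mul_w : ∀ f : Arrow C, mul f ≫ ff.r.app f = ff.r.app (Arrow.mk (ff.r.app f))
  comul_counit : ∀ f : Arrow C,
    comul f ≫ ff.r.app (Arrow.mk (ff.l.app f)) = 𝟙 (ff.E.obj f)
  comul_counit' : ∀ f : Arrow C, comul f ≫ ff.E.map (ff.εhom f) = 𝟙 (ff.E.obj f)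
  mul_unit : ∀ f : Arrow C, ff.l.app (Arrow.mk (ff.r.app f)) ≫ mul f = 𝟙 (ff.E.obj f)
  mul_unit' : ∀ f : Arrow C, ff.E.map (ff.ηhom f) ≫ mul f = 𝟙 (ff.E.obj f)
  comul_coassoc : ∀ f : Arrow C,
    comul f ≫ comul (Arrow.mk (ff.l.app f)) =
      comul f ≫ ff.E.map (Arrow.homMk (u := 𝟙 f.left) (v := comul f)
        (by exact (Category.id_comp _).trans (comul_w f).symm) :
          Arrow.mk (ff.l.app f) ⟶ Arrow.mk (ff.l.app (Arrow.mk (ff.l.app f))))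
  mul_assoc : ∀ f : Arrow C,
    mul (Arrow.mk (ff.r.app f)) ≫ mul f =
      ff.E.map (Arrow.homMk (u := mul f) (v := 𝟙 f.right)
        (by exact (mul_w f).trans (Category.comp_id _).symm) :
          Arrow.mk (ff.r.app (Arrow.mk (ff.r.app f))) ⟶ Arrow.mk (ff.r.app f)) ≫ mul f
  distrib : ∀ f : Arrow C,
    comul (Arrow.mk (ff.r.app f)) ≫
      ff.E.map (Arrow.homMk (u := comul f) (v := mul f)
        (by exact (comul_counit f).trans (mul_unit f).symm) :
          Arrow.mk (ff.l.app (Arrow.mk (ff.r.app f))) ⟶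
            Arrow.mk (ff.r.app (Arrow.mk (ff.l.app f)))) ≫
      mul (Arrow.mk (ff.l.app f)) = mul f ≫ comul f

namespace AWFS

variable {C : Type u} [Category.{v} C] (A : AWFS C)

/-- A coalgebra for the comonad `L` of an AWFS: since `L` is a comonad over the domain
functor, a coalgebra structure on `f : A ⟶ B` is a single map `s : B ⟶ E f`. -/
structure Coalgebra (f : Arrow C) where
  s : f.right ⟶ A.ff.E.obj f
  w : f.hom ≫ s = A.ff.l.app f
  counit : s ≫ A.ff.r.app f = 𝟙 f.right
  coassoc : s ≫ A.comul f =
    s ≫ A.ff.E.map (Arrow.homMk (u := 𝟙 f.left) (v := s)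
      (by exact (Category.id_comp _).trans w.symm) : f ⟶ Arrow.mk (A.ff.l.app f))

/-- An algebra for the monad `R` of an AWFS: since `R` is a monad over the codomain
functor, an algebra structure on `g : C ⟶ D` is a single map `p : E g ⟶ C`. -/
structure Algebra (g : Arrow C) where
  p : A.ff.E.obj g ⟶ g.left
  w : p ≫ g.hom = A.ff.r.app g
  unit : A.ff.l.app g ≫ p = 𝟙 g.left
  assoc : A.mul g ≫ p =
    A.ff.E.map (Arrow.homMk (u := p) (v := 𝟙 g.right)
      (by exact w.trans (Category.comp_id _).symm) : Arrow.mk (A.ff.r.app g) ⟶ g) ≫ p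

/-- The canonical diagonal filler of an `L`-coalgebra against an `R`-algebra. -/
def fill {f g : Arrow C} (cf : A.Coalgebra f) (ag : A.Algebra g) (sq : f ⟶ g) :
    f.right ⟶ g.left :=
  cf.s ≫ A.ff.E.map sq ≫ ag.p

end AWFS

/- The proof tests the square against the cofree `L`-coalgebra `λ g` and the counit square
`ε_g : λ g → g`.  By the counit law `E ε_g ∘ comul g = 1`, the canonical filler of `ε_g ≫ sq`
against any algebra `(g', p')` is `p' ∘ E sq`; for `sq = 1` it is `p` itself. -/

namespace AWFS

variable {C : Type u} [Category.{v} C] (A : AWFS C)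

def cofreeCoalgebra (g : Arrow C) : A.Coalgebra (Arrow.mk (A.ff.l.app g)) where
  s := A.comul g
  w := A.comul_w g
  counit := A.comul_counit g
  coassoc := A.comul_coassoc g

theorem fill_cofreeCoalgebra_εhom_comp {g g' : Arrow C} (ag' : A.Algebra g') (sq : g ⟶ g') :
    A.fill (A.cofreeCoalgebra g) ag' (A.ff.εhom g ≫ sq) = A.ff.E.map sq ≫ ag'.p := by
  simp only [fill, cofreeCoalgebra, Functor.map_comp, Category.assoc,
    reassoc_of% (A.comul_counit' g)]

theorem fill_cofreeCoalgebra_εhom {g : Arrow C} (ag : A.Algebra g) :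
    A.fill (A.cofreeCoalgebra g) ag (A.ff.εhom g) = ag.p := by
  simpa using A.fill_cofreeCoalgebra_εhom_comp ag (𝟙 g)

end AWFS

/-- Let `(L, R)` be an AWFS on `C`.  If a square `(c, d) : g → g'` between the underlying
maps of `R`-algebras `(g, p)` and `(g', p')` commutes with the canonical lifting operations
against all `L`-coalgebras, then it is a morphism of `R`-algebras: `c ∘ p = p' ∘ E(c, d)`.
(Hence the functor from `R`-algebras to maps equipped with coalgebra lifting operations is
fully faithful.) -/
theorem AWFS.algebra_hom_of_commutes_with_liftings
    {C : Type u} [Category.{v} C] (A : AWFS C)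
    {g g' : Arrow C} (ag : A.Algebra g) (ag' : A.Algebra g') (cd : g ⟶ g')
    (h : ∀ (f : Arrow C) (cf : A.Coalgebra f) (sq : f ⟶ g),
      A.fill cf ag sq ≫ cd.left = A.fill cf ag' (sq ≫ cd)) :
    ag.p ≫ cd.left = A.ff.E.map cd ≫ ag'.p :=
  calc ag.p ≫ cd.left
      = A.fill (A.cofreeCoalgebra g) ag (A.ff.εhom g) ≫ cd.left := by
        rw [A.fill_cofreeCoalgebra_εhom]
    _ = A.fill (A.cofreeCoalgebra g) ag' (A.ff.εhom g ≫ cd) := h _ _ _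
    _ = A.ff.E.map cd ≫ ag'.p := A.fill_cofreeCoalgebra_εhom_comp ag' cd
end

section
/- Let R be a monad on the arrow category C^2 such that: (a) every identity map 1_A carries an R-algebra structure 1̂_A; (b) for each f : A → B the square (f, f) is an algebra map 1̂_A → 1̂_B; and (c) for each R-algebra ĝ : A → B the square (g, 1_B) is an algebra map ĝ → 1̂_B. Then R is isomorphic to a monad over the codomain functor, and the algebra structures on identity arrows are unique. -/
/-!
The codomain components `ρ f` of the composites `T f ⟶ T (𝟙 (cod f)) ⟶ 𝟙 (cod f)` are natural
in `f` by (b), and retract the codomain component of `η f` by (a). Applying (c) to the free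
algebra `μ f` identifies the codomain component of `μ f` with `ρ (T f)`; naturality of `ρ` at
`η f` then makes `ρ f` a section as well, hence an isomorphism. Replacing each arrow `T f` by
`T f ≫ ρ f` and transporting the monad structure along these isomorphisms gives a monad over
`cod`. Finally, (c) for an algebra structure `a` on `𝟙 X` reads `a = 1̂_X`, because the square
`(𝟙 X, 𝟙 X)` is an identity.
-/

open CategoryTheory

universe v u

namespace CategoryTheory.Monad

variable {C : Type u} [Category.{v} C]

def isoTransport {F : C ⥤ C} (T : Monad C) (i : (T : C ⥤ C) ≅ F) : T ≅ T.transport i :=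
  MonadIso.mk i (fun _ => rfl) fun _ => by
    simp [transport, ← T.map_comp_assoc]

end CategoryTheory.Monad

namespace ArrowMonad

variable {C : Type u} [Category.{v} C]

structure CodRetraction (T : Monad (Arrow C)) where
  app : ∀ f : Arrow C, (T.obj f).right ⟶ f.right
  naturality : ∀ {f g : Arrow C} (φ : f ⟶ g), (T.map φ).right ≫ app g = app f ≫ φ.right
  η_comp : ∀ f : Arrow C, (T.η.app f).right ≫ app f = 𝟙 f.right
  μ_right : ∀ f : Arrow C, (T.μ.app f).right = app (T.obj f)

namespace CodRetraction

variable {T : Monad (Arrow C)} (ρ : CodRetraction T)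

lemma comp_η (f : Arrow C) : ρ.app f ≫ (T.η.app f).right = 𝟙 (T.obj f).right := by
  rw [← ρ.naturality, ← ρ.μ_right, ← Arrow.comp_right, T.right_unit]
  rfl

def codIso (f : Arrow C) : (T.obj f).right ≅ f.right where
  hom := ρ.app f
  inv := (T.η.app f).right
  hom_inv_id := ρ.comp_η f
  inv_hom_id := ρ.η_comp f

def arrowIso (f : Arrow C) : T.obj f ≅ Arrow.mk ((T.obj f).hom ≫ ρ.app f) :=
  Arrow.isoMk (Iso.refl _) (ρ.codIso f)

def monad : Monad (Arrow C) :=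
  T.transport <| T.toFunctor.isoCopyObj _ ρ.arrowIso

def iso : T ≅ ρ.monad := T.isoTransport _

lemma monad_map_right {f g : Arrow C} (φ : f ⟶ g) : (ρ.monad.map φ).right = φ.right := by
  change (T.η.app f).right ≫ (T.map φ).right ≫ ρ.app g = φ.right
  rw [ρ.naturality, reassoc_of% ρ.η_comp]

lemma monad_η_right (f : Arrow C) : (ρ.monad.η.app f).right = 𝟙 f.right :=
  ρ.η_comp f

lemma monad_μ_right (f : Arrow C) : (ρ.monad.μ.app f).right = 𝟙 f.right := by
  change ((T.η.app _).right ≫ (T.map (ρ.arrowIso f).inv).right) ≫ (T.μ.app f).right ≫ ρ.app f =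
    𝟙 f.right
  rw [Category.assoc, ρ.μ_right, reassoc_of% ρ.naturality, reassoc_of% ρ.η_comp]
  exact ρ.η_comp f

end CodRetraction

def toIdCod (f : Arrow C) : f ⟶ Arrow.mk (𝟙 f.right) :=
  Arrow.homMk f.hom (𝟙 f.right)

def idSquare {X Y : C} (u : X ⟶ Y) : Arrow.mk (𝟙 X) ⟶ Arrow.mk (𝟙 Y) :=
  Arrow.homMk u u

@[simp]
lemma toIdCod_right (f : Arrow C) : (toIdCod f).right = 𝟙 f.right :=
  rfl

@[simp]
lemma toIdCod_mk_id (X : C) : toIdCod (Arrow.mk (𝟙 X)) = 𝟙 _ := by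
  ext <;> rfl

lemma toIdCod_naturality {f g : Arrow C} (φ : f ⟶ g) :
    φ ≫ toIdCod g = toIdCod f ≫ idSquare φ.right := by
  ext <;> simp [toIdCod, idSquare]

section IdentityAlgebras

variable {T : Monad (Arrow C)} {idAlg : ∀ X : C, T.obj (Arrow.mk (𝟙 X)) ⟶ Arrow.mk (𝟙 X)}

lemma eq_of_isAlgebra
    (toIdCod_algHom : ∀ A : T.Algebra,
      T.map (toIdCod A.A) ≫ idAlg A.A.right = A.a ≫ toIdCod A.A)
    {X : C} (a : T.obj (Arrow.mk (𝟙 X)) ⟶ Arrow.mk (𝟙 X))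
    (unit : T.η.app _ ≫ a = 𝟙 _) (assoc : T.μ.app _ ≫ a = T.map a ≫ a) : a = idAlg X := by
  simpa using (toIdCod_algHom ⟨_, a, unit, assoc⟩).symm

def codRetraction (idAlg_unit : ∀ X : C, T.η.app (Arrow.mk (𝟙 X)) ≫ idAlg X = 𝟙 _)
    (idSquare_algHom : ∀ {X Y : C} (u : X ⟶ Y),
      T.map (idSquare u) ≫ idAlg Y = idAlg X ≫ idSquare u)
    (toIdCod_algHom : ∀ A : T.Algebra,
      T.map (toIdCod A.A) ≫ idAlg A.A.right = A.a ≫ toIdCod A.A) :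
    CodRetraction T where
  app f := (T.map (toIdCod f) ≫ idAlg f.right).right
  naturality {f g} φ := by
    rw [← Arrow.comp_right, ← T.map_comp_assoc, toIdCod_naturality, T.map_comp_assoc,
      idSquare_algHom, ← Category.assoc, Arrow.comp_right]
    rfl
  η_comp f := by
    rw [← Arrow.comp_right, ← T.η.naturality_assoc, idAlg_unit]
    simp
  μ_right f := by
    have free : T.map (toIdCod (T.obj f)) ≫ idAlg (T.obj f).right =
        T.μ.app f ≫ toIdCod (T.obj f) :=
      toIdCod_algHom (T.free.obj f)
    rw [free]
    simp

end IdentityAlgebras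

end ArrowMonad

open ArrowMonad in
/-- Let `R` be a monad on the arrow category `C²` such that (a) every identity map `1_A`
carries an `R`-algebra structure `1̂_A`; (b) for every `f : A ⟶ B` the square `(f, f)` is an
algebra map `1̂_A → 1̂_B`; (c) for every `R`-algebra `ĝ : A → B` the square `(g, 1_B)` is an
algebra map `ĝ → 1̂_B`.  Then `R` is isomorphic to a monad over the codomain functor, and
the algebra structures on identity arrows are unique. -/
theorem monad_iso_over_codomain {C : Type u} [Category.{v} C] (T : Monad (Arrow C))
    (idAlg : ∀ X : C, T.obj (Arrow.mk (𝟙 X)) ⟶ Arrow.mk (𝟙 X))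
    (idAlg_unit : ∀ X : C, T.η.app (Arrow.mk (𝟙 X)) ≫ idAlg X = 𝟙 (Arrow.mk (𝟙 X)))
    (hb : ∀ {X Y : C} (f : X ⟶ Y),
      T.map (Arrow.homMk (u := f) (v := f) (by simp) :
          Arrow.mk (𝟙 X) ⟶ Arrow.mk (𝟙 Y)) ≫ idAlg Y =
        idAlg X ≫ (Arrow.homMk (u := f) (v := f) (by simp) :
          Arrow.mk (𝟙 X) ⟶ Arrow.mk (𝟙 Y)))
    (hc : ∀ (g : Arrow C) (a : T.obj g ⟶ g),
      T.η.app g ≫ a = 𝟙 g → T.μ.app g ≫ a = T.map a ≫ a →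
      T.map (Arrow.homMk (u := g.hom) (v := 𝟙 g.right) (by simp) :
          g ⟶ Arrow.mk (𝟙 g.right)) ≫ idAlg g.right =
        a ≫ (Arrow.homMk (u := g.hom) (v := 𝟙 g.right) (by simp) :
          g ⟶ Arrow.mk (𝟙 g.right))) :
    (∃ (T' : Monad (Arrow C)) (_ : T ≅ T')
        (hobj : ∀ f : Arrow C, (T'.obj f).right = f.right),
      (∀ {f g : Arrow C} (φ : f ⟶ g),
        (T'.map φ).right = eqToHom (hobj f) ≫ φ.right ≫ eqToHom (hobj g).symm) ∧
      (∀ f : Arrow C, (T'.η.app f).right = eqToHom (hobj f).symm) ∧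
      (∀ f : Arrow C, (T'.μ.app f).right = eqToHom (hobj (T'.obj f)))) ∧
    (∀ (X : C) (a a' : T.obj (Arrow.mk (𝟙 X)) ⟶ Arrow.mk (𝟙 X)),
      T.η.app _ ≫ a = 𝟙 _ → T.μ.app _ ≫ a = T.map a ≫ a →
      T.η.app _ ≫ a' = 𝟙 _ → T.μ.app _ ≫ a' = T.map a' ≫ a' → a = a') := by
  have toIdCod_algHom (A : T.Algebra) := hc A.A A.a A.unit A.assoc
  let ρ := codRetraction idAlg_unit hb toIdCod_algHom
  refine ⟨⟨ρ.monad, ρ.iso, fun _ => rfl, fun φ => ?_, ρ.monad_η_right, ρ.monad_μ_right⟩, ?_⟩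
  · rw [ρ.monad_map_right]
    exact ((Category.id_comp _).trans (Category.comp_id _)).symm
  · intro X a a' unit assoc unit' assoc'
    rw [eq_of_isAlgebra toIdCod_algHom a unit assoc,
      eq_of_isAlgebra toIdCod_algHom a' unit' assoc']
end

section
/- Let C be a category with pullbacks and R a monad on C^2 over the codomain functor. Then the forgetful functor U : Alg(R) → C^2 is a discrete pullback-fibration: for every R-algebra ĝ on g and every pullback square (h, k) : f → g in C^2, there is a unique R-algebra structure f̂ on f making (h, k) an algebra map f̂ → ĝ, and this algebra map is cartesian. -/
/-! Because `T` lies over the codomain, the unit law pins down the codomain component of every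
algebra structure (and of `μ` and of every `T.map φ`): it is the identification `hobj`. A pullback
square `sq : f ⟶ g` identifies maps into `f` with maps into `g` together with a compatible
codomain component, so the structure on `f` is the lift of `T.map sq ≫ a`, and each algebra law
and the cartesian property follows from the corresponding law for `a` after composing with `sq`. -/

open CategoryTheory
open CategoryTheory.Limits

universe v u

def IsAlgStr {C : Type u} [Category.{v} C] (T : Monad (Arrow C)) {f : Arrow C}
    (a : T.obj f ⟶ f) : Prop :=
  T.η.app f ≫ a = 𝟙 f ∧ T.μ.app f ≫ a = T.map a ≫ a

namespace CategoryTheory.Arrow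

variable {C : Type u} [Category.{v} C] {X f g : Arrow C} (sq : f ⟶ g)
  (hpb : IsPullback sq.left f.hom g.hom sq.right)
include hpb

lemma hom_ext_of_isPullback {u v : X ⟶ f} (h : u ≫ sq = v ≫ sq) (hr : u.right = v.right) :
    u = v := by
  refine Arrow.hom_ext _ _ (hpb.hom_ext ?_ ?_) hr
  · simpa only [Arrow.comp_left] using congrArg CommaMorphism.left h
  · rw [Arrow.w u, Arrow.w v, hr]

lemma exists_lift_of_isPullback (φ : X ⟶ g) (r : X.right ⟶ f.right)
    (hr : r ≫ sq.right = φ.right) : ∃ ψ : X ⟶ f, ψ ≫ sq = φ ∧ ψ.right = r := by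
  have hw : φ.left ≫ g.hom = (X.hom ≫ r) ≫ sq.right := by
    rw [Arrow.w φ, Category.assoc, hr]
  refine ⟨⟨hpb.lift φ.left (X.hom ≫ r) hw, r, hpb.lift_snd _ _ _⟩, ?_, rfl⟩
  exact Arrow.hom_ext _ _ (hpb.lift_fst _ _ _) hr

end CategoryTheory.Arrow

section OverCodomain

variable {C : Type u} [Category.{v} C] (T : Monad (Arrow C))
  (hobj : ∀ f : Arrow C, (T.obj f).right = f.right)
  (hη : ∀ f : Arrow C, (T.η.app f).right = eqToHom (hobj f).symm)
include hη

lemma right_eq_eqToHom_of_unit_comp {x : Arrow C} {d : T.obj x ⟶ x}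
    (hd : T.η.app x ≫ d = 𝟙 x) : d.right = eqToHom (hobj x) := by
  have h := congrArg CommaMorphism.right hd
  simp only [Arrow.comp_right, Arrow.id_right, hη] at h
  simpa using eqToHom (hobj x) ≫= h

lemma map_right_eq {f g : Arrow C} (φ : f ⟶ g) :
    (T.map φ).right = eqToHom (hobj f) ≫ φ.right ≫ eqToHom (hobj g).symm := by
  have h := congrArg CommaMorphism.right (T.η.naturality φ)
  simp only [Functor.id_map, Arrow.comp_right, hη] at h
  simp [h]

lemma mu_right_eq (f : Arrow C) : (T.μ.app f).right = eqToHom (hobj (T.obj f)) :=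
  right_eq_eqToHom_of_unit_comp T hobj hη (T.left_unit f)

variable {f g : Arrow C} {a : T.obj g ⟶ g} {sq : f ⟶ g}
  (hpb : IsPullback sq.left f.hom g.hom sq.right)
include hpb

lemma map_comp_eq_of_isPullback {b : T.obj f ⟶ f} (hb : IsAlgStr T b)
    (hsq : T.map sq ≫ a = b ≫ sq) {e : Arrow C} {c : T.obj e ⟶ e} (hc : IsAlgStr T c)
    {ρ : e ⟶ g} (hρ : T.map ρ ≫ a = c ≫ ρ) {τ : e ⟶ f} (hτ : τ ≫ sq = ρ) :
    T.map τ ≫ b = c ≫ τ := by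
  refine Arrow.hom_ext_of_isPullback sq hpb ?_ ?_
  · calc (T.map τ ≫ b) ≫ sq = T.map ρ ≫ a := by simp [← hsq, ← hτ]
      _ = (c ≫ τ) ≫ sq := by rw [hρ, Category.assoc, hτ]
  · simp [map_right_eq T hobj hη, right_eq_eqToHom_of_unit_comp T hobj hη hb.1,
      right_eq_eqToHom_of_unit_comp T hobj hη hc.1]

lemma isAlgStr_of_isPullback (ha : IsAlgStr T a) {b : T.obj f ⟶ f}
    (hb : b ≫ sq = T.map sq ≫ a) (hbr : b.right = eqToHom (hobj f)) : IsAlgStr T b := by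
  constructor
  · refine Arrow.hom_ext_of_isPullback sq hpb ?_ (by simp [hη, hbr])
    rw [Category.assoc, hb, ← T.η.naturality_assoc, Functor.id_map, ha.1]
    simp
  · refine Arrow.hom_ext_of_isPullback sq hpb ?_ ?_
    · calc (T.μ.app f ≫ b) ≫ sq = T.map (T.map sq) ≫ T.μ.app g ≫ a := by
            rw [Category.assoc, hb, ← T.μ.naturality_assoc, Functor.comp_map]
        _ = T.map (T.map sq ≫ a) ≫ a := by rw [ha.2, Functor.map_comp_assoc]
        _ = (T.map b ≫ b) ≫ sq := by simp [← hb]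
    · simp [mu_right_eq T hobj hη, map_right_eq T hobj hη, hbr]

end OverCodomain

theorem algebras_discrete_pullback_fibration_general
    {C : Type u} [Category.{v} C] (T : Monad (Arrow C))
    (hobj : ∀ f : Arrow C, (T.obj f).right = f.right)
    (hη : ∀ f : Arrow C, (T.η.app f).right = eqToHom (hobj f).symm) :
    ∀ (g : Arrow C) (a : T.obj g ⟶ g), IsAlgStr T a →
      ∀ (f : Arrow C) (sq : f ⟶ g), IsPullback sq.left f.hom g.hom sq.right →
        (∃! b : T.obj f ⟶ f, IsAlgStr T b ∧ T.map sq ≫ a = b ≫ sq) ∧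
        (∀ b : T.obj f ⟶ f, IsAlgStr T b → T.map sq ≫ a = b ≫ sq →
          ∀ (e : Arrow C) (c : T.obj e ⟶ e), IsAlgStr T c →
            ∀ ρ : e ⟶ g, T.map ρ ≫ a = c ≫ ρ →
              ∀ τ : e ⟶ f, τ ≫ sq = ρ → T.map τ ≫ b = c ≫ τ) := by
  intro g a ha f sq hpb
  obtain ⟨b, hb, hbr⟩ := Arrow.exists_lift_of_isPullback sq hpb (T.map sq ≫ a)
    (eqToHom (hobj f))
    (by simp [map_right_eq T hobj hη, right_eq_eqToHom_of_unit_comp T hobj hη ha.1])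
  have hbAlg := isAlgStr_of_isPullback T hobj hη hpb ha hb hbr
  refine ⟨⟨b, ⟨hbAlg, hb.symm⟩, fun b' ⟨hb'Alg, hb'⟩ => ?_⟩,
    fun _ hb hsq _ _ hc _ hρ _ hτ => map_comp_eq_of_isPullback T hobj hη hpb hb hsq hc hρ hτ⟩
  -- uniqueness is the cartesian property applied to `τ = 𝟙 f`
  simpa using (map_comp_eq_of_isPullback T hobj hη hpb hbAlg hb.symm hb'Alg hb'
    (Category.id_comp sq)).symm

/-- Let `C` have pullbacks and `R` be a monad on `C²` over the codomain functor.  Then the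
forgetful functor `Alg(R) → C²` is a discrete pullback-fibration: for every `R`-algebra
structure on `g` and every pullback square `(h, k) : f → g` there is a unique `R`-algebra
structure on `f` making `(h, k)` an algebra map, and this algebra map is cartesian. -/
theorem algebras_discrete_pullback_fibration
    {C : Type u} [Category.{v} C] [HasPullbacks C] (T : Monad (Arrow C))
    (hobj : ∀ f : Arrow C, (T.obj f).right = f.right)
    (hmap : ∀ {f g : Arrow C} (φ : f ⟶ g),
      (T.map φ).right = eqToHom (hobj f) ≫ φ.right ≫ eqToHom (hobj g).symm)
    (hη : ∀ f : Arrow C, (T.η.app f).right = eqToHom (hobj f).symm)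
    (hμ : ∀ f : Arrow C, (T.μ.app f).right = eqToHom (hobj (T.obj f))) :
    ∀ (g : Arrow C) (a : T.obj g ⟶ g), IsAlgStr T a →
      ∀ (f : Arrow C) (sq : f ⟶ g), IsPullback sq.left f.hom g.hom sq.right →
        (∃! b : T.obj f ⟶ f, IsAlgStr T b ∧ T.map sq ≫ a = b ≫ sq) ∧
        (∀ b : T.obj f ⟶ f, IsAlgStr T b → T.map sq ≫ a = b ≫ sq →
          ∀ (e : Arrow C) (c : T.obj e ⟶ e), IsAlgStr T c →
            ∀ ρ : e ⟶ g, T.map ρ ≫ a = c ≫ ρ →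
              ∀ τ : e ⟶ f, τ ≫ sq = ρ → T.map τ ≫ b = c ≫ τ) :=
  algebras_discrete_pullback_fibration_general T hobj hη
end

section
/- The forgetful functor from the category of split epimorphisms in C to the arrow category C^2 is strictly monadic whenever C has binary coproducts; moreover the resulting monad on C^2 is algebraically free on its underlying pointed endofunctor, i.e. algebras for the underlying pointed endofunctor coincide with algebras for the monad. -/
/-!
The left adjoint sends `f : A ⟶ B` to the free split epi `⟨f, 1⟩ : A ⨿ B ⟶ B` with section
`inr`, and the counit at a split epi `(g, p)` is `⟨1, p⟩ : A ⨿ B ⟶ A`. If `a : T f ⟶ f` satisfies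
only the unit law, then its right component is `1` and its left component is `⟨1, p⟩` with
`p := inr ≫ a.left`, a section of `f`. So `a` is the structure map that the comparison functor
assigns to the split epi `(f, p)`, and associativity comes for free. The same construction
`a ↦ (f, p)` is a strict inverse of the comparison functor.
-/

open CategoryTheory
open CategoryTheory.Limits

universe v u

/-- The category of split epimorphisms in `C`: objects are maps equipped with a chosen
section. -/
structure SplitEpiObj (C : Type u) [Category.{v} C] where
  X : C
  Y : C
  g : X ⟶ Y
  p : Y ⟶ X
  split : p ≫ g = 𝟙 Y

/-- Morphisms of split epimorphisms: serially commuting squares. -/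
structure SplitEpiHom {C : Type u} [Category.{v} C] (a b : SplitEpiObj C) where
  u : a.X ⟶ b.X
  s : a.Y ⟶ b.Y
  wg : u ≫ b.g = a.g ≫ s
  wp : a.p ≫ u = s ≫ b.p

namespace SplitEpiHom

variable {C : Type u} [Category.{v} C]

theorem ext' {a b : SplitEpiObj C} {φ ψ : SplitEpiHom a b}
    (h1 : φ.u = ψ.u) (h2 : φ.s = ψ.s) : φ = ψ := by
  cases φ; cases ψ; cases h1; cases h2; rfl

end SplitEpiHom

instance {C : Type u} [Category.{v} C] : Category (SplitEpiObj C) where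
  Hom := SplitEpiHom
  id a := ⟨𝟙 a.X, 𝟙 a.Y, by simp, by simp⟩
  comp φ ψ := ⟨φ.u ≫ ψ.u, φ.s ≫ ψ.s,
    by rw [Category.assoc, ψ.wg, ← Category.assoc, φ.wg, Category.assoc],
    by rw [← Category.assoc, φ.wp, Category.assoc, ψ.wp, ← Category.assoc]⟩
  id_comp φ := SplitEpiHom.ext' (by simp) (by simp)
  comp_id φ := SplitEpiHom.ext' (by simp) (by simp)
  assoc φ ψ χ := SplitEpiHom.ext' (by simp) (by simp)

/-- The forgetful functor from split epimorphisms to the arrow category. -/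
def forgetSplitEpi (C : Type u) [Category.{v} C] : SplitEpiObj C ⥤ Arrow C where
  obj a := Arrow.mk a.g
  map {a b} φ := Arrow.homMk (u := φ.u) (v := φ.s) φ.wg
  map_id a := by apply Arrow.hom_ext <;> rfl
  map_comp φ ψ := by apply Arrow.hom_ext <;> rfl

/-- The free split epimorphism `⟨f, 1⟩ : A + B → B` on `f : A → B`. -/
noncomputable def freeSplitEpi {C : Type u} [Category.{v} C] [HasBinaryCoproducts C]
    (f : Arrow C) : SplitEpiObj C where
  X := f.left ⨿ f.right
  Y := f.right
  g := coprod.desc f.hom (𝟙 f.right)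
  p := coprod.inr
  split := by exact coprod.inr_desc f.hom (𝟙 f.right)

-- Stated in `C`: the components of a map out of `T f` live on objects that are coproducts only
-- up to unfolding, where `simp` and `rw` fail, whereas `exact` accepts these lemmas there.
namespace CategoryTheory.Limits.coprod

variable {C : Type u} [Category.{v} C] {A A' B B' : C} [HasBinaryCoproduct A B]
  [HasBinaryCoproduct A' B']

attribute [local simp] inl_desc inr_desc inr_desc_assoc

lemma desc_id_inr_comp {l : A ⨿ B ⟶ A} (hl : inl ≫ l = 𝟙 A) : desc (𝟙 A) (inr ≫ l) = l := by
  ext <;> simp [hl]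

lemma inr_comp_comp_eq_id {g : A ⟶ B} {l : A ⨿ B ⟶ A} {r : B ⟶ B}
    (hw : l ≫ g = desc g (𝟙 B) ≫ r) (hr : r = 𝟙 B) : (inr ≫ l) ≫ g = 𝟙 B := by
  simp [hw, hr]

lemma inr_comp_comp_of_map_comp {u : A ⟶ A'} {s : B ⟶ B'} {l : A ⨿ B ⟶ A}
    {l' : A' ⨿ B' ⟶ A'} (h : map u s ≫ l' = l ≫ u) : (inr ≫ l) ≫ u = s ≫ inr ≫ l' := by
  rw [Category.assoc, ← h, inr_map_assoc]

end CategoryTheory.Limits.coprod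

lemma SplitEpiHom.hext {C : Type u} [Category.{v} C] {a a' b b' : SplitEpiObj C} (ha : a = a')
    (hb : b = b') {φ : a ⟶ b} {ψ : a' ⟶ b'} (hu : φ.u ≍ ψ.u) (hs : φ.s ≍ ψ.s) : φ ≍ ψ := by
  subst ha hb
  exact heq_of_eq (ext' (eq_of_heq hu) (eq_of_heq hs))

lemma CategoryTheory.Monad.Algebra.Hom.hext {D : Type*} [Category D] {T : Monad D}
    {A A' B B' : T.Algebra} (hA : A = A') (hB : B = B') {φ : A ⟶ B} {ψ : A' ⟶ B'}
    (h : φ.f ≍ ψ.f) : φ ≍ ψ := by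
  subst hA hB
  exact heq_of_eq (Hom.ext (eq_of_heq h))

namespace FreeSplitEpi

section Adjunction

variable (C : Type u) [Category.{v} C] [HasBinaryCoproducts C]

attribute [local simp] coprod.inl_desc coprod.inr_desc

noncomputable def functor : Arrow C ⥤ SplitEpiObj C where
  obj := freeSplitEpi
  map φ :=
    { u := coprod.map φ.left φ.right
      s := φ.right
      wg := by
        show coprod.map φ.left φ.right ≫ coprod.desc _ (𝟙 _) = coprod.desc _ (𝟙 _) ≫ φ.right
        ext <;> simp
      wp := coprod.inr_map _ _ }
  map_id _ := SplitEpiHom.ext' coprod.map_id_id rfl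
  map_comp _ _ := SplitEpiHom.ext' (coprod.map_map _ _ _ _).symm rfl

noncomputable def adjunction : functor C ⊣ forgetSplitEpi C where
  unit :=
    { app f := Arrow.homMk (coprod.inl : f.left ⟶ f.left ⨿ f.right) (𝟙 f.right)
        ((coprod.inl_desc f.hom (𝟙 f.right)).trans (Category.comp_id f.hom).symm)
      naturality _ _ φ := by
        ext
        · exact (coprod.inl_map φ.left φ.right).symm
        · exact (Category.comp_id _).trans (Category.id_comp _).symm }
  counit :=
    { app a :=
        { u := coprod.desc (𝟙 a.X) a.p
          s := 𝟙 a.Y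
          wg := by
            show coprod.desc (𝟙 a.X) a.p ≫ a.g = coprod.desc a.g (𝟙 a.Y) ≫ 𝟙 a.Y
            ext <;> simp [a.split]
          wp := (coprod.inr_desc _ _).trans (Category.id_comp _).symm }
      naturality a b φ := SplitEpiHom.ext'
        (by
          show coprod.map φ.u φ.s ≫ coprod.desc (𝟙 b.X) b.p = coprod.desc (𝟙 a.X) a.p ≫ φ.u
          ext <;> simp [φ.wp])
        ((Category.comp_id _).trans (Category.id_comp _).symm) }
  left_triangle_components f := SplitEpiHom.ext'
    (by
      show coprod.map coprod.inl (𝟙 f.right) ≫ coprod.desc (𝟙 _) coprod.inr = 𝟙 (f.left ⨿ f.right)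
      ext <;> simp)
    (Category.comp_id _)
  right_triangle_components a := by
    ext
    · exact coprod.inl_desc (𝟙 a.X) a.p
    · exact Category.comp_id _

end Adjunction

section PointedAlgebra

variable {C : Type u} [Category.{v} C] [HasBinaryCoproducts C] {f : Arrow C}
  {a : (adjunction C).toMonad.obj f ⟶ f}

lemma inl_comp_left_of_unit_comp (ha : (adjunction C).toMonad.η.app f ≫ a = 𝟙 f) :
    coprod.inl ≫ a.left = 𝟙 f.left :=
  congrArg (·.left) ha

lemma right_eq_id_of_unit_comp (ha : (adjunction C).toMonad.η.app f ≫ a = 𝟙 f) :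
    a.right = 𝟙 f.right :=
  (Category.id_comp _).symm.trans (congrArg (·.right) ha)

noncomputable def splitEpiOfUnitComp (ha : (adjunction C).toMonad.η.app f ≫ a = 𝟙 f) :
    SplitEpiObj C where
  X := f.left
  Y := f.right
  g := f.hom
  p := coprod.inr ≫ a.left
  split := coprod.inr_comp_comp_eq_id a.w (right_eq_id_of_unit_comp ha)

lemma eq_comparison_obj_a_of_unit_comp (ha : (adjunction C).toMonad.η.app f ≫ a = 𝟙 f) :
    a = ((Monad.comparison (adjunction C)).obj (splitEpiOfUnitComp ha)).a := by
  ext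
  · exact (coprod.desc_id_inr_comp (inl_comp_left_of_unit_comp ha)).symm
  · exact right_eq_id_of_unit_comp ha

theorem assoc_of_unit_comp (ha : (adjunction C).toMonad.η.app f ≫ a = 𝟙 f) :
    (adjunction C).toMonad.μ.app f ≫ a = (adjunction C).toMonad.map a ≫ a := by
  rw [eq_comparison_obj_a_of_unit_comp ha]
  exact ((Monad.comparison (adjunction C)).obj (splitEpiOfUnitComp ha)).assoc

end PointedAlgebra

section Comparison

variable (C : Type u) [Category.{v} C] [HasBinaryCoproducts C]

noncomputable def algebraFunctor : (adjunction C).toMonad.Algebra ⥤ SplitEpiObj C where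
  obj A := splitEpiOfUnitComp A.unit
  map φ :=
    { u := φ.f.left
      s := φ.f.right
      wg := φ.f.w
      wp := coprod.inr_comp_comp_of_map_comp (congrArg (·.left) φ.h) }

-- In both composites a morphism is sent to one with the same components, definitionally.
lemma comparison_comp_algebraFunctor :
    Monad.comparison (adjunction C) ⋙ algebraFunctor C = 𝟭 (SplitEpiObj C) := by
  have hobj (a : SplitEpiObj C) :
      (Monad.comparison (adjunction C) ⋙ algebraFunctor C).obj a = a := by
    obtain ⟨X, _, _, p, _⟩ := a
    show SplitEpiObj.mk _ _ _ _ _ = _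
    congr 1
    exact coprod.inr_desc (𝟙 X) p
  exact Functor.hext hobj fun a b _ => SplitEpiHom.hext (hobj a) (hobj b) HEq.rfl HEq.rfl

lemma algebraFunctor_comp_comparison :
    algebraFunctor C ⋙ Monad.comparison (adjunction C) = 𝟭 (adjunction C).toMonad.Algebra := by
  have hobj (A : (adjunction C).toMonad.Algebra) :
      (algebraFunctor C ⋙ Monad.comparison (adjunction C)).obj A = A := by
    obtain ⟨_, _, hunit, _⟩ := A
    show Monad.Algebra.mk _ _ _ _ = _
    congr 1
    exact (eq_comparison_obj_a_of_unit_comp hunit).symm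
  exact Functor.hext hobj fun A B _ => Monad.Algebra.Hom.hext (hobj A) (hobj B) HEq.rfl

end Comparison

end FreeSplitEpi

/-- If `C` has binary coproducts then the forgetful functor from split epimorphisms to the
arrow category is strictly monadic (it has a left adjoint and the comparison functor to the
Eilenberg–Moore category of the induced monad is an isomorphism of categories); moreover the
induced monad is algebraically free on its underlying pointed endofunctor: every algebra for
the pointed endofunctor automatically satisfies the monad associativity law. -/
theorem splitEpi_strictly_monadic_and_algebraically_free
    {C : Type u} [Category.{v} C] [HasBinaryCoproducts C] :
    ∃ (F : Arrow C ⥤ SplitEpiObj C) (adj : F ⊣ forgetSplitEpi C)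
      (G : adj.toMonad.Algebra ⥤ SplitEpiObj C),
      Monad.comparison adj ⋙ G = 𝟭 (SplitEpiObj C) ∧
      G ⋙ Monad.comparison adj = 𝟭 adj.toMonad.Algebra ∧
      (∀ (f : Arrow C) (a : adj.toMonad.obj f ⟶ f),
        adj.toMonad.η.app f ≫ a = 𝟙 f →
        adj.toMonad.μ.app f ≫ a = adj.toMonad.map a ≫ a) :=
  ⟨FreeSplitEpi.functor C, FreeSplitEpi.adjunction C, FreeSplitEpi.algebraFunctor C,
    FreeSplitEpi.comparison_comp_algebraFunctor C, FreeSplitEpi.algebraFunctor_comp_comparison C,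
    fun _ _ => FreeSplitEpi.assoc_of_unit_comp⟩
end

section
/- In a 2-category K, for morphisms g : A → B and p : B → A with g ∘ p = 1_B, the following are equivalent: (1) g is left adjoint to p with identity counit; (2) for every object X and every x : A → X, y : B → X, precomposition with p gives a bijection between 2-cells x ⟹ y∘g and 2-cells x∘p ⟹ y; (3) there exists a (necessarily unique) 2-cell η : 1_A ⟹ p∘g with g∘η = 1_g and η∘p = 1_p. -/
/-!
Whiskering by `p` followed by a counit `ϵ : p ≫ f ⟶ 𝟙` gives maps `(x ⟶ f ≫ y) → (p ≫ x ⟶ y)`;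
for the counit of an adjunction `f ⊣ p` this is Mathlib's bijection `Adjunction.homEquiv₁`.
Conversely, if all these maps are bijective, the preimage of the right unitor is a unit `η`
satisfying the right triangle identity; whiskering by `η` is then a right inverse, hence the
inverse, of the bijection, and this yields the left triangle identity. In a strict bicategory
with `ϵ` an identity the two triangle identities say that `η ▷ f` and `p ◁ η` are identities.
-/

open CategoryTheory
open scoped CategoryTheory.Bicategory

universe w v u

namespace CategoryTheory.Bicategory

variable {B : Type u} [Bicategory.{w, v} B] {a b : B} {f : a ⟶ b} {p : b ⟶ a}

def transposeOfCounit (ϵ : p ≫ f ⟶ 𝟙 b) {c : B} {x : a ⟶ c} {y : b ⟶ c} (γ : x ⟶ f ≫ y) :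
    p ≫ x ⟶ y :=
  p ◁ γ ≫ (α_ _ _ _).inv ≫ ϵ ▷ y ≫ (λ_ y).hom

def untransposeOfUnit (η : 𝟙 a ⟶ f ≫ p) {c : B} {x : a ⟶ c} {y : b ⟶ c} (β : p ≫ x ⟶ y) :
    x ⟶ f ≫ y :=
  (λ_ _).inv ≫ η ▷ x ≫ (α_ _ _ _).hom ≫ f ◁ β

theorem Adjunction.homEquiv₁_eq_transposeOfCounit (adj : f ⊣ p) {c : B} {x : a ⟶ c}
    {y : b ⟶ c} : ⇑(adj.homEquiv₁ (g := x) (h := y)) = transposeOfCounit adj.counit := rfl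

theorem transposeOfCounit_untransposeOfUnit (η : 𝟙 a ⟶ f ≫ p) (ϵ : p ≫ f ⟶ 𝟙 b)
    (h : rightZigzag η ϵ = (ρ_ p).hom ≫ (λ_ p).inv) {c : B} {x : a ⟶ c} {y : b ⟶ c}
    (β : p ≫ x ⟶ y) : transposeOfCounit ϵ (untransposeOfUnit η β) = β :=
  calc
    _ = 𝟙 _ ⊗≫ p ◁ η ▷ x ⊗≫ ((p ≫ f) ◁ β ≫ ϵ ▷ y) ⊗≫ 𝟙 _ := by
      simp only [transposeOfCounit, untransposeOfUnit]; bicategory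
    _ = 𝟙 _ ⊗≫ rightZigzag η ϵ ▷ x ⊗≫ β := by
      rw [whisker_exchange]; bicategory
    _ = β := by
      rw [h]; bicategory

theorem untransposeOfUnit_transposeOfCounit (η : 𝟙 a ⟶ f ≫ p) (ϵ : p ≫ f ⟶ 𝟙 b) :
    untransposeOfUnit η (transposeOfCounit ϵ (x := f) (y := 𝟙 b) (ρ_ f).inv) =
      (λ_ f).inv ≫ leftZigzag η ϵ := by
  simp only [transposeOfCounit, untransposeOfUnit]; bicategory

theorem exists_adjunction_of_bijective_transposeOfCounit (ϵ : p ≫ f ⟶ 𝟙 b)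
    (h : ∀ (c : B) (x : a ⟶ c) (y : b ⟶ c),
      Function.Bijective (transposeOfCounit ϵ (x := x) (y := y))) :
    ∃ adj : f ⊣ p, adj.counit = ϵ := by
  obtain ⟨η, hη⟩ := (h a (𝟙 a) p).2 (ρ_ p).hom
  have right : rightZigzag η ϵ = (ρ_ p).hom ≫ (λ_ p).inv := by
    rw [← hη]; simp only [transposeOfCounit]; bicategory
  have left : leftZigzag η ϵ = (λ_ f).hom ≫ (ρ_ f).inv := by
    have := (h b f (𝟙 b)).1 (transposeOfCounit_untransposeOfUnit η ϵ right
      (transposeOfCounit ϵ (ρ_ f).inv))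
    rwa [untransposeOfUnit_transposeOfCounit, Iso.inv_comp_eq] at this
  exact ⟨⟨η, ϵ, left, right⟩, rfl⟩

section Strict

variable [Strict B]

theorem transposeOfCounit_eqToHom (hpf : p ≫ f = 𝟙 b) {c : B} {x : a ⟶ c} {y : b ⟶ c}
    (γ : x ⟶ f ≫ y) :
    transposeOfCounit (eqToHom hpf) γ =
      p ◁ γ ≫ eqToHom (by rw [← Strict.assoc, hpf, Strict.id_comp]) := by
  simp [transposeOfCounit, Strict.associator_eqToIso, Strict.leftUnitor_eqToIso]

theorem leftZigzag_eqToHom_eq_iff (hpf : p ≫ f = 𝟙 b) (η : 𝟙 a ⟶ f ≫ p) :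
    leftZigzag η (eqToHom hpf) = (λ_ f).hom ≫ (ρ_ f).inv ↔
      η ▷ f = eqToHom (by rw [Strict.id_comp, Strict.assoc, hpf, Strict.comp_id]) := by
  simp [bicategoricalComp, Strict.associator_eqToIso, Strict.leftUnitor_eqToIso,
    Strict.rightUnitor_eqToIso, comp_eqToHom_iff]

theorem rightZigzag_eqToHom_eq_iff (hpf : p ≫ f = 𝟙 b) (η : 𝟙 a ⟶ f ≫ p) :
    rightZigzag η (eqToHom hpf) = (ρ_ p).hom ≫ (λ_ p).inv ↔
      p ◁ η = eqToHom (by rw [Strict.comp_id, ← Strict.assoc, hpf, Strict.id_comp]) := by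
  simp [bicategoricalComp, Strict.associator_eqToIso, Strict.leftUnitor_eqToIso,
    Strict.rightUnitor_eqToIso, comp_eqToHom_iff]

end Strict

end CategoryTheory.Bicategory

/-- In a 2-category, for `g : A ⟶ B` and `p : B ⟶ A` with `g ∘ p = 1_B`, the following are
equivalent: (1) `g` is left adjoint to `p` with identity counit; (2) for every `x : A ⟶ X`
and `y : B ⟶ X`, precomposition with `p` gives a bijection between 2-cells `x ⟹ y ∘ g` and
2-cells `x ∘ p ⟹ y`; (3) there is a 2-cell `η : 1_A ⟹ p ∘ g` with `g ∘ η = 1_g` and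
`η ∘ p = 1_p`. -/
theorem lali_tfae {B : Type u} [Bicategory.{w, v} B] [Bicategory.Strict B]
    {a b : B} (g : a ⟶ b) (p : b ⟶ a) (hpg : p ≫ g = 𝟙 b) :
    List.TFAE
      [ ∃ adj : Bicategory.Adjunction g p, adj.counit = eqToHom hpg,
        ∀ (X : B) (x : a ⟶ X) (y : b ⟶ X),
          Function.Bijective (fun α : x ⟶ g ≫ y =>
            (p ◁ α) ≫ eqToHom (show p ≫ g ≫ y = y by
              rw [← Bicategory.Strict.assoc, hpg, Bicategory.Strict.id_comp])),
        ∃ η : 𝟙 a ⟶ g ≫ p,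
          η ▷ g = eqToHom (show 𝟙 a ≫ g = (g ≫ p) ≫ g by
            rw [Bicategory.Strict.id_comp, Bicategory.Strict.assoc, hpg,
              Bicategory.Strict.comp_id]) ∧
          p ◁ η = eqToHom (show p ≫ 𝟙 a = p ≫ g ≫ p by
            rw [Bicategory.Strict.comp_id, ← Bicategory.Strict.assoc, hpg,
              Bicategory.Strict.id_comp]) ] := by
  have transpose_eq (X : B) (x : a ⟶ X) (y : b ⟶ X) :
      Bicategory.transposeOfCounit (eqToHom hpg) (x := x) (y := y) =
        fun α => p ◁ α ≫ eqToHom _ :=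
    funext (Bicategory.transposeOfCounit_eqToHom hpg)
  tfae_have 1 → 2 := by
    rintro ⟨adj, hϵ⟩ X x y
    rw [← transpose_eq, ← hϵ, ← adj.homEquiv₁_eq_transposeOfCounit]
    exact adj.homEquiv₁.bijective
  tfae_have 2 → 1 := fun h =>
    Bicategory.exists_adjunction_of_bijective_transposeOfCounit _
      fun X x y => transpose_eq X x y ▸ h X x y
  tfae_have 1 → 3 := by
    rintro ⟨adj, hϵ⟩
    exact ⟨adj.unit, (Bicategory.leftZigzag_eqToHom_eq_iff hpg _).1 (hϵ ▸ adj.left_triangle),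
      (Bicategory.rightZigzag_eqToHom_eq_iff hpg _).1 (hϵ ▸ adj.right_triangle)⟩
  tfae_have 3 → 1 := by
    rintro ⟨η, hleft, hright⟩
    exact ⟨⟨η, eqToHom hpg, (Bicategory.leftZigzag_eqToHom_eq_iff hpg η).2 hleft,
      (Bicategory.rightZigzag_eqToHom_eq_iff hpg η).2 hright⟩, rfl⟩
  tfae_finish
end

section
/- Lalis in Cat are not closed under retracts in the arrow category: there exist a functor f : A → 1 admitting lali structure (equivalently, A has a terminal object) and a retract g : B → 1 of f in Cat^2 such that g admits no lali structure (B has no terminal object). Concretely, take B the free category on one idempotent t with t∘t = t, and A obtained from B by freely adjoining a terminal object. -/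
open CategoryTheory
open CategoryTheory.Limits

/-!
Take for `B` the one-object category of the multiplicative monoid `{1, 0}` of `ZMod 2`: it is
the free category on the idempotent `t = 0`. Since `t ∘ f = t` for every morphism `f`, the maps
`t` form a cocone over `𝟭 B`, and sending the adjoined terminal object of `WithTerminal B` to the
vertex of this cocone retracts `WithTerminal B` onto `B`. In `B` itself the unique object has
the two distinct endomorphisms `1` and `t`, so it is not terminal.
-/

namespace CategoryTheory

namespace WithTerminal

variable {C : Type*} [Category* C]

def retraction (c : Cocone (𝟭 C)) : WithTerminal C ⥤ C :=
  lift (𝟭 C) c.ι.app fun _ _ f => c.w f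

theorem incl_comp_retraction (c : Cocone (𝟭 C)) : incl ⋙ retraction c = 𝟭 C :=
  rfl

end WithTerminal

namespace SingleObj

def zeroCocone (M : Type*) [MonoidWithZero M] : Cocone (𝟭 (SingleObj M)) where
  pt := star M
  ι :=
    { app := fun _ => (0 : M)
      naturality := fun _ _ f => by
        change (0 : M) * f = 1 * 0
        rw [zero_mul, one_mul] }

theorem not_hasTerminal (M : Type*) [Monoid M] [Nontrivial M] : ¬ HasTerminal (SingleObj M) :=
  fun _ => not_subsingleton M ⟨fun a b => terminal.hom_ext (P := ⊤_ SingleObj M) a b⟩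

end SingleObj

end CategoryTheory

/-- Lalis in `Cat` are not closed under retracts in the arrow category: there are a
category `A` with a terminal object (so that `A → 1` admits lali structure) and a retract
`B` of `A` (functors `i : B ⥤ A`, `r : A ⥤ B` with `i ⋙ r = 𝟭 B`, which is exactly a
retract `B → 1` of `A → 1` in `Cat²`) such that `B` has no terminal object (so that
`B → 1` admits no lali structure). -/
theorem lalis_not_retract_closed :
    ∃ (A B : Type) (_ : SmallCategory A) (_ : SmallCategory B)
      (i : B ⥤ A) (r : A ⥤ B),
      i ⋙ r = 𝟭 B ∧ HasTerminal A ∧ ¬ HasTerminal B :=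
  ⟨WithTerminal (SingleObj (ZMod 2)), SingleObj (ZMod 2), inferInstance, inferInstance,
    WithTerminal.incl, WithTerminal.retraction (SingleObj.zeroCocone (ZMod 2)),
    WithTerminal.incl_comp_retraction _, WithTerminal.starTerminal.hasTerminal,
    SingleObj.not_hasTerminal (ZMod 2)⟩
end

section
/- Let C be a category, J a small category, and U : J → C^2 a functor. A map g : C → D of C equipped with a lifting operation against U corresponds precisely to a section of the natural transformation ψ_{-,g} : C(cod U(-), C) ⟹ C^2(U(-), g) of functors J^op → Set taking m : cod Uj → C to the square (m ∘ Uj, g ∘ m) : Uj → g. -/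
open CategoryTheory

universe w v u

variable {C : Type u} [Category.{v} C] {J : Type w} [Category.{v} J]

/-- The functor `J^op ⥤ Set`, `j ↦ C²(U j, g)` of commuting squares from `U j` to `g`. -/
def squaresFunctor (U : J ⥤ Arrow C) (g : Arrow C) : Jᵒᵖ ⥤ Type v :=
  U.op ⋙ yoneda.obj g

/-- The functor `J^op ⥤ Set`, `j ↦ C(cod (U j), dom g)` of candidate diagonals. -/
def diagonalsFunctor (U : J ⥤ Arrow C) (g : Arrow C) : Jᵒᵖ ⥤ Type v :=
  U.op ⋙ Arrow.rightFunc.op ⋙ yoneda.obj g.left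

/-- The natural transformation `ψ` sending `m : cod (U j) ⟶ dom g` to the square
`(m ∘ U j, g ∘ m) : U j → g`. -/
def ψnat (U : J ⥤ Arrow C) (g : Arrow C) :
    diagonalsFunctor U g ⟶ squaresFunctor U g where
  app j := TypeCat.ofHom fun (m : (U.obj j.unop).right ⟶ g.left) => Arrow.homMk (u := (U.obj j.unop).hom ≫ m) (v := m ≫ g.hom) (by simp)
  naturality j j' α := by
    ext (m : (U.obj j.unop).right ⟶ g.left)
    change Arrow.homMk (u := (U.obj j'.unop).hom ≫ ((U.map α.unop).right ≫ m))
        (v := ((U.map α.unop).right ≫ m) ≫ g.hom) (by simp) =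
      U.map α.unop ≫ Arrow.homMk (u := (U.obj j.unop).hom ≫ m) (v := m ≫ g.hom) (by simp)
    apply Arrow.hom_ext
    · have := Arrow.w (U.map α.unop)
      simp only [Arrow.homMk_left, Arrow.comp_left]
      rw [← Category.assoc, ← this, Category.assoc]
    · simp only [Arrow.homMk_right, Arrow.comp_right]
      rw [Category.assoc]

/-- A lifting operation on `g` against `U : J ⥤ C²`: a natural choice of diagonal fillers
for all squares `U j → g`. -/
structure LiftingOperation (U : J ⥤ Arrow C) (g : Arrow C) where
  fill : ∀ (j : J) (sq : U.obj j ⟶ g), (U.obj j).right ⟶ g.left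
  fill_left : ∀ (j : J) (sq : U.obj j ⟶ g), (U.obj j).hom ≫ fill j sq = sq.left
  fill_right : ∀ (j : J) (sq : U.obj j ⟶ g), fill j sq ≫ g.hom = sq.right
  natural : ∀ {j j' : J} (α : j ⟶ j') (sq : U.obj j' ⟶ g),
    fill j (U.map α ≫ sq) = (U.map α).right ≫ fill j' sq

/-! The section condition at `j` says exactly that `σ_j sq` is a diagonal filler of `sq`, and
naturality of `σ` is exactly naturality of the fillers, so a lifting operation and a section of `ψ`
are the same data, repackaged. -/

abbrev ψnatSection (U : J ⥤ Arrow C) (g : Arrow C) : Type _ :=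
  {σ : squaresFunctor U g ⟶ diagonalsFunctor U g // σ ≫ ψnat U g = 𝟙 (squaresFunctor U g)}

namespace LiftingOperation

variable {U : J ⥤ Arrow C} {g : Arrow C}

theorem comp_ψnat_eq_id_iff (σ : squaresFunctor U g ⟶ diagonalsFunctor U g) :
    σ ≫ ψnat U g = 𝟙 (squaresFunctor U g) ↔
      ∀ (j : Jᵒᵖ) (sq : U.obj j.unop ⟶ g),
        (U.obj j.unop).hom ≫ σ.app j sq = sq.left ∧ σ.app j sq ≫ g.hom = sq.right := by
  constructor
  · intro h j sq
    have hsq : (ψnat U g).app j (σ.app j sq) = sq :=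
      ConcreteCategory.congr_hom (NatTrans.congr_app h j) sq
    exact ⟨congrArg CommaMorphism.left hsq, congrArg CommaMorphism.right hsq⟩
  · intro h
    ext j sq
    exact Arrow.hom_ext _ _ (h j sq).1 (h j sq).2

def toSection (φ : LiftingOperation U g) : ψnatSection U g :=
  ⟨{ app := fun j => TypeCat.ofHom fun sq => φ.fill j.unop sq
     naturality := fun _ _ α => by ext sq; exact φ.natural α.unop sq },
    (comp_ψnat_eq_id_iff _).2 fun j sq => ⟨φ.fill_left j.unop sq, φ.fill_right j.unop sq⟩⟩

def ofSection (σ : ψnatSection U g) : LiftingOperation U g where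
  fill j sq := σ.1.app (Opposite.op j) sq
  fill_left j sq := ((comp_ψnat_eq_id_iff σ.1).1 σ.2 (Opposite.op j) sq).1
  fill_right j sq := ((comp_ψnat_eq_id_iff σ.1).1 σ.2 (Opposite.op j) sq).2
  natural α sq := ConcreteCategory.congr_hom (σ.1.naturality α.op) sq

def equivSection : LiftingOperation U g ≃ ψnatSection U g where
  toFun := toSection
  invFun := ofSection
  left_inv _ := rfl
  right_inv _ := rfl

@[simp]
theorem equivSection_app (φ : LiftingOperation U g) (j : Jᵒᵖ) (sq : U.obj j.unop ⟶ g) :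
    (equivSection φ).1.app j sq = φ.fill j.unop sq :=
  rfl

end LiftingOperation

/-- A map `g` of `C` equipped with a lifting operation against `U : J ⥤ C²` corresponds
precisely to a section of the natural transformation
`ψ : C(cod U(-), dom g) ⟹ C²(U(-), g)` taking `m` to the square `(m ∘ U j, g ∘ m)`. -/
theorem liftingOperation_equiv_section (U : J ⥤ Arrow C) (g : Arrow C) :
    ∃ e : LiftingOperation U g ≃
        {σ : squaresFunctor U g ⟶ diagonalsFunctor U g //
          σ ≫ ψnat U g = 𝟙 (squaresFunctor U g)},
      ∀ (φ : LiftingOperation U g) (j : Jᵒᵖ) (sq : U.obj j.unop ⟶ g),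
        ((e φ).1.app j) sq = φ.fill j.unop sq :=
  ⟨LiftingOperation.equivSection, LiftingOperation.equivSection_app⟩
end

section
/- For a functor G : C → D, equipping the canonical comparison functor C^2 → D ↓ G with a right adjoint right inverse (a right adjoint section, i.e. rari structure) is equivalent to equipping G with the structure of a cloven Grothendieck fibration. -/
open CategoryTheory

universe v₁ v₂ u₁ u₂

variable {C : Type u₁} {D : Type u₂} [Category.{v₁} C] [Category.{v₂} D]

/-- An arrow `f` of `C` is cartesian over `D` (with respect to `G : C ⥤ D`) if every
`g : z ⟶ y` together with a factorisation `G g = G f ∘ β` admits a unique lift of `β`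
factoring `g` through `f`. -/
def IsCartesianArrow (G : C ⥤ D) {x y : C} (f : x ⟶ y) : Prop :=
  ∀ {z : C} (g : z ⟶ y) (β : G.obj z ⟶ G.obj x), β ≫ G.map f = G.map g →
    ∃! γ : z ⟶ x, G.map γ = β ∧ γ ≫ f = g

/-- The canonical comparison functor `C² ⥤ D ↓ G`, sending `f : c' ⟶ c` to
`(G c', c, G f)`. -/
def toComma (G : C ⥤ D) : Arrow C ⥤ Comma (𝟭 D) G where
  obj f := { left := G.obj f.left, right := f.right, hom := G.map f.hom }
  map {f g} φ :=
    { left := G.map φ.left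
      right := φ.right
      w := by
        dsimp
        rw [← G.map_comp, Arrow.w φ, G.map_comp] }
  map_id f := by apply CommaMorphism.ext <;> simp
  map_comp φ ψ := by apply CommaMorphism.ext <;> simp

/-- A right adjoint right inverse (rari) structure on a functor `F`: a section `S` of `F`
(`F ∘ S = Id`) which is right adjoint to `F`, the counit of the adjunction being the
identity (via the equality `S ⋙ F = 𝟭`). -/
structure Rari {X : Type u₁} {Y : Type u₂} [Category.{v₁} X] [Category.{v₂} Y]
    (F : X ⥤ Y) where
  S : Y ⥤ X
  sec : S ⋙ F = 𝟭 Y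
  adj : F ⊣ S
  counit_eq : adj.counit = eqToHom sec

/-- A cleavage on `G : C ⥤ D`: for every `c` and `β : d ⟶ G c`, a chosen cartesian arrow
over `β` with codomain `c`. -/
structure Cleavage (G : C ⥤ D) where
  obj : ∀ {c : C} {d : D}, (d ⟶ G.obj c) → C
  hom : ∀ {c : C} {d : D} (β : d ⟶ G.obj c), obj β ⟶ c
  over' : ∀ {c : C} {d : D} (β : d ⟶ G.obj c), G.obj (obj β) = d
  map_eq : ∀ {c : C} {d : D} (β : d ⟶ G.obj c),
    G.map (hom β) = eqToHom (over' β) ≫ β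
  cart : ∀ {c : C} {d : D} (β : d ⟶ G.obj c), IsCartesianArrow G (hom β)

/-!
A rari structure on `F` amounts to choosing, for every object `y`, a preimage `s` with `F s = y`
through which `F` induces bijections `(A ⟶ s) ≃ (F A ⟶ y)` for all `A`: these bijections are the
hom-equivalences of the adjunction, inverse to `ψ ↦ F ψ` because the counit is the identity.
For `F = toComma G` and `y = (d, c, β)` such an `s` is an arrow of `C` lying over `β`, and
`toComma G` being bijective on morphisms of arrows into `s` is exactly the cartesianness of `s`.
-/

namespace Rari

variable {X Y : Type*} [Category X] [Category Y] {F : X ⥤ Y}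

lemma obj_S_obj (R : Rari F) (y : Y) : F.obj (R.S.obj y) = y :=
  Functor.congr_obj R.sec y

lemma map_bijective (R : Rari F) (A : X) (y : Y) :
    Function.Bijective (F.map : (A ⟶ R.S.obj y) → (F.obj A ⟶ F.obj (R.S.obj y))) := by
  have hcounit : ∀ ψ : A ⟶ R.S.obj y,
      (R.adj.homEquiv A y).symm ψ = F.map ψ ≫ eqToHom (R.obj_S_obj y) := fun ψ => by
    simp [Adjunction.homEquiv_counit, R.counit_eq, eqToHom_app]
  have hpost := ((Iso.refl (F.obj A)).homCongr (eqToIso (R.obj_S_obj y))).bijective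
  refine (hpost.of_comp_iff' _).1 ?_
  convert (R.adj.homEquiv A y).symm.bijective using 1
  ext ψ
  simp [hcounit]

noncomputable def mapEquiv {s : Y → X} (hs : ∀ y, F.obj (s y) = y)
    (hbij : ∀ A y, Function.Bijective (F.map : (A ⟶ s y) → (F.obj A ⟶ F.obj (s y))))
    (A : X) (y : Y) : (A ⟶ s y) ≃ (F.obj A ⟶ y) :=
  (Equiv.ofBijective _ (hbij A y)).trans ((Iso.refl (F.obj A)).homCongr (eqToIso (hs y)))

variable {s : Y → X} (hs : ∀ y, F.obj (s y) = y)
  (hbij : ∀ A y, Function.Bijective (F.map : (A ⟶ s y) → (F.obj A ⟶ F.obj (s y))))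

lemma mapEquiv_apply {A : X} {y : Y} (ψ : A ⟶ s y) :
    mapEquiv hs hbij A y ψ = F.map ψ ≫ eqToHom (hs y) := by
  simp [mapEquiv, Iso.homCongr_apply]

lemma mapEquiv_naturality {A' A : X} {y : Y} (f : A' ⟶ A) (g : F.obj A ⟶ y) :
    (mapEquiv hs hbij A' y).symm (F.map f ≫ g) = f ≫ (mapEquiv hs hbij A y).symm g := by
  rw [Equiv.symm_apply_eq, mapEquiv_apply, F.map_comp, Category.assoc, ← mapEquiv_apply hs hbij,
    Equiv.apply_symm_apply]

noncomputable def ofBijective : Rari F where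
  S := Adjunction.rightAdjointOfEquiv (fun A y => (mapEquiv hs hbij A y).symm)
    fun _ _ _ => mapEquiv_naturality hs hbij
  sec := CategoryTheory.Functor.ext hs fun y y' g => by
    rw [← cancel_mono (eqToHom (hs y')), Functor.comp_map, ← mapEquiv_apply hs hbij]
    simp [mapEquiv_apply]
  adj := Adjunction.adjunctionOfEquivRight _ _
  counit_eq := by
    ext y
    simp [mapEquiv_apply, eqToHom_app]

end Rari

lemma nonempty_rari_iff {X Y : Type*} [Category X] [Category Y] (F : X ⥤ Y) :
    Nonempty (Rari F) ↔ ∀ y, ∃ s : X, F.obj s = y ∧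
      ∀ A, Function.Bijective (F.map : (A ⟶ s) → (F.obj A ⟶ F.obj s)) := by
  refine ⟨fun ⟨R⟩ y => ⟨R.S.obj y, R.obj_S_obj y, fun A => R.map_bijective A y⟩, fun h => ?_⟩
  choose s hs hbij using h
  exact ⟨Rari.ofBijective hs fun A y => hbij y A⟩

namespace IsCartesianArrow

variable {G : C ⥤ D}

lemma bijective_toComma_map {X : Arrow C} (hX : IsCartesianArrow G X.hom) (A : Arrow C) :
    Function.Bijective ((toComma G).map : (A ⟶ X) → _) := by
  refine ⟨fun φ₁ φ₂ h => ?_, fun m => ?_⟩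
  · have hleft : G.map φ₁.left = G.map φ₂.left := by simpa [toComma] using congrArg (·.left) h
    have hright : φ₁.right = φ₂.right := by simpa [toComma] using congrArg (·.right) h
    have hw : G.map φ₁.left ≫ G.map X.hom = G.map (A.hom ≫ φ₁.right) := by
      rw [← G.map_comp, Arrow.w]
    refine Arrow.hom_ext _ _ ((hX _ _ hw).unique ⟨rfl, Arrow.w φ₁⟩ ⟨hleft.symm, ?_⟩) hright
    rw [Arrow.w, hright]
  · have hw : m.left ≫ G.map X.hom = G.map (A.hom ≫ m.right) := by
      simpa [toComma] using m.w
    obtain ⟨γ, hγG, hγ⟩ := (hX _ _ hw).exists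
    exact ⟨Arrow.homMk γ m.right hγ, CommaMorphism.ext hγG rfl⟩

lemma of_bijective_toComma_map {X : Arrow C}
    (hX : ∀ A : Arrow C, Function.Bijective ((toComma G).map : (A ⟶ X) → _)) :
    IsCartesianArrow G X.hom := by
  intro z g β hβ
  let m : (toComma G).obj (Arrow.mk (𝟙 z)) ⟶ (toComma G).obj X :=
    { left := β, right := g, w := by simpa [toComma] using hβ }
  obtain ⟨φ, hφ⟩ := (hX _).2 m
  have hφG : G.map φ.left = β := by simpa [toComma] using congrArg (·.left) hφ
  have hφr : φ.right = g := by simpa [toComma] using congrArg (·.right) hφ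
  refine ⟨φ.left, ⟨hφG, by rw [Arrow.w φ, hφr]; exact Category.id_comp g⟩, fun γ ⟨hγG, hγ⟩ => ?_⟩
  have : Arrow.homMk' (f := 𝟙 z) γ g (by simpa using hγ) = φ :=
    (hX _).1 (CommaMorphism.ext (by simpa [toComma] using hγG.trans hφG.symm)
      (by simpa [toComma] using hφr.symm))
  exact congrArg (·.left) this

lemma iff_bijective_toComma_map {X : Arrow C} : IsCartesianArrow G X.hom ↔
    ∀ A : Arrow C, Function.Bijective ((toComma G).map : (A ⟶ X) → _) :=
  ⟨bijective_toComma_map, of_bijective_toComma_map⟩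

end IsCartesianArrow

lemma toComma_obj_mk_eq {G : C ⥤ D} {x c : C} {d : D} {f : x ⟶ c} {β : d ⟶ G.obj c}
    (h : G.obj x = d) (hf : G.map f = eqToHom h ≫ β) :
    (toComma G).obj (Arrow.mk f) = ⟨d, c, β⟩ := by
  subst h
  simp only [eqToHom_refl, Category.id_comp] at hf
  simp [toComma, hf]

lemma nonempty_cleavage_iff_forall_exists_cartesian (G : C ⥤ D) :
    Nonempty (Cleavage G) ↔
      ∀ Y : Comma (𝟭 D) G, ∃ X : Arrow C, (toComma G).obj X = Y ∧ IsCartesianArrow G X.hom := by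
  refine ⟨fun ⟨cl⟩ ⟨d, c, β⟩ => ⟨Arrow.mk (cl.hom β), toComma_obj_mk_eq (cl.over' β)
    (cl.map_eq β), cl.cart β⟩, fun h => ?_⟩
  have hlift : ∀ (c : C) (d : D) (β : d ⟶ G.obj c), ∃ (x : C) (f : x ⟶ c) (hx : G.obj x = d),
      G.map f = eqToHom hx ≫ β ∧ IsCartesianArrow G f := by
    intro c d β
    obtain ⟨⟨x, c', f⟩, hX, hcart⟩ := h ⟨d, c, β⟩
    cases hX
    exact ⟨x, f, rfl, by simp, hcart⟩
  choose x f hx hf hcart using hlift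
  exact ⟨⟨fun β => x _ _ β, fun β => f _ _ β, fun β => hx _ _ β, fun β => hf _ _ β,
    fun β => hcart _ _ β⟩⟩

/-- Equipping the canonical comparison functor `C² ⥤ D ↓ G` with a right adjoint right
inverse is equivalent to equipping `G` with the structure of a cloven Grothendieck
fibration. -/
theorem rari_toComma_iff_cleavage (G : C ⥤ D) :
    Nonempty (Rari (toComma G)) ↔ Nonempty (Cleavage G) := by
  simp only [nonempty_rari_iff, nonempty_cleavage_iff_forall_exists_cartesian,
    IsCartesianArrow.iff_bijective_toComma_map]
end
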